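/- Fix y > 1 and suppose B is a real-valued function, differentiable on a neighborhood of 1, with B(1) = y and satisfying φ←(B(x)) + xy·φ←(B(x)/(xy)) = φ←(x) + x·φ←(y) for all x in that neighborhood. Then B'(1) = (φ←(y) + κ(y+1))/(φ←'(y) + κ). -/

import Mathlib

open Real Set Filter Topology

/-- κ = √γ / α with α = (γ-1)/2. -/
noncomputable def kappa (γ : ℝ) : ℝ := Real.sqrt γ / ((γ - 1) / 2)

/-- The shock branch x ↦ √((1 - x^{-1/α})(x^{γ/α} - 1)), α = (γ-1)/2. -/
noncomputable def shockPart (γ : ℝ) (x : ℝ) : ℝ :=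
  Real.sqrt ((1 - x ^ (-(1 : ℝ) / ((γ - 1) / 2))) * (x ^ (γ / ((γ - 1) / 2)) - 1))

/-- Backward auxiliary function φ← : rarefaction branch κ(x-1) for x ≤ 1,
    shock branch for x ≥ 1 (they agree, with value 0, at x = 1). -/
noncomputable def phiB (γ : ℝ) (x : ℝ) : ℝ :=
  if x ≤ 1 then kappa γ * (x - 1) else shockPart γ x

/-- Forward auxiliary function φ→ : shock branch -√(...) for x ≤ 1,
    rarefaction branch κ(x-1) for x ≥ 1 (they agree, with value 0, at x = 1). -/
noncomputable def phiF (γ : ℝ) (x : ℝ) : ℝ :=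
  if x < 1 then -shockPart γ x else kappa γ * (x - 1)

/-! Differentiating the interaction identity at `x = 1`, where `B 1 = y` and `B 1 / (1 * y) = 1`,
gives `φ←'(y) B'(1) + κ (B'(1) - y) = κ + φ←(y)`, using `φ←(1) = 0` and `φ←'(1) = κ`.
The only delicate input is `φ←'(1) = κ`: on the shock side `φ←` is the square root of a product
of two functions vanishing at `1` with derivatives `1/α` and `γ/α`, so its one-sided derivative
is `√(γ/α²) = κ`, matching the slope of the rarefaction side. Since `φ←` is monotone,
`φ←'(y) + κ > 0` and the linear equation can be solved for `B'(1)`. -/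

theorem hasDerivWithinAt_sqrt_mul_Ioi {f g : ℝ → ℝ} {a b x : ℝ} (hf : HasDerivAt f a x)
    (hg : HasDerivAt g b x) (hfx : f x = 0) (hgx : g x = 0) :
    HasDerivWithinAt (fun z => √(f z * g z)) √(a * b) (Ioi x) x := by
  have hx : x ∉ Ioi x := lt_irrefl x
  rw [hasDerivWithinAt_iff_tendsto_slope' hx]
  have hslope : Tendsto (fun z => slope f x z * slope g x z) (𝓝[>] x) (𝓝 (a * b)) :=
    ((hasDerivWithinAt_iff_tendsto_slope' hx).1 hf.hasDerivWithinAt).mul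
      ((hasDerivWithinAt_iff_tendsto_slope' hx).1 hg.hasDerivWithinAt)
  refine ((continuous_sqrt.tendsto _).comp hslope).congr' ?_
  filter_upwards [self_mem_nhdsWithin] with z (hz : x < z)
  simp only [Function.comp_apply, slope_def_field, hfx, hgx, mul_zero, sqrt_zero, sub_zero]
  rw [div_mul_div_comm, ← sq, sqrt_div' _ (sq_nonneg _), sqrt_sq (sub_pos.2 hz).le]

theorem hasDerivAt_rpow_const_one (p : ℝ) : HasDerivAt (fun x : ℝ => x ^ p) p 1 := by
  simpa using hasDerivAt_rpow_const (x := 1) (p := p) (Or.inl one_ne_zero)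

section BackwardAuxiliary

variable {γ : ℝ}

lemma kappa_pos (hγ : 1 < γ) : 0 < kappa γ :=
  div_pos (sqrt_pos.2 (by linarith)) (by linarith)

lemma phiB_one (γ : ℝ) : phiB γ 1 = 0 := by simp [phiB]

lemma shockPart_monotoneOn (hγ : 1 < γ) : MonotoneOn (shockPart γ) (Ici 1) := by
  intro a (ha : 1 ≤ a) b (hb : 1 ≤ b) hab
  have hneg : -(1 : ℝ) / ((γ - 1) / 2) ≤ 0 :=
    div_nonpos_of_nonpos_of_nonneg (by norm_num) (by linarith)
  have hpos : 0 ≤ γ / ((γ - 1) / 2) := div_nonneg (by linarith) (by linarith)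
  have h1 := rpow_le_rpow_of_nonpos (by linarith) hab hneg
  have h2 := rpow_le_rpow (by linarith) hab hpos
  have h3 := one_le_rpow ha hpos
  have h4 := rpow_le_one_of_one_le_of_nonpos hb hneg
  exact sqrt_le_sqrt (by nlinarith)

lemma phiB_monotone (hγ : 1 < γ) : Monotone (phiB γ) := by
  intro a b hab
  unfold phiB
  split_ifs with ha hb hb
  · exact mul_le_mul_of_nonneg_left (by linarith) (kappa_pos hγ).le
  · exact le_trans (mul_nonpos_of_nonneg_of_nonpos (kappa_pos hγ).le (by linarith)) (sqrt_nonneg _)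
  · linarith
  · exact shockPart_monotoneOn hγ (not_le.1 ha).le (not_le.1 hb).le hab

lemma differentiableAt_phiB {y : ℝ} (hγ : 1 < γ) (hy : 1 < y) :
    DifferentiableAt ℝ (phiB γ) y := by
  have hy0 : y ≠ 0 := by linarith
  have h1 : y ^ (-(1 : ℝ) / ((γ - 1) / 2)) < 1 :=
    rpow_lt_one_of_one_lt_of_neg hy (div_neg_of_neg_of_pos (by norm_num) (by linarith))
  have h2 : 1 < y ^ (γ / ((γ - 1) / 2)) :=
    one_lt_rpow hy (div_pos (by linarith) (by linarith))
  have hshock : DifferentiableAt ℝ (shockPart γ) y :=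
    ((((hasDerivAt_rpow_const (Or.inl hy0)).differentiableAt.const_sub 1).mul
      ((hasDerivAt_rpow_const (Or.inl hy0)).differentiableAt.sub_const 1))).sqrt
      (mul_pos (by linarith) (by linarith)).ne'
  refine hshock.congr_of_eventuallyEq ?_
  filter_upwards [Ioi_mem_nhds hy] with z (hz : 1 < z)
  simp [phiB, not_le.2 hz]

lemma hasDerivAt_phiB_one (hγ : 1 < γ) : HasDerivAt (phiB γ) (kappa γ) 1 := by
  have hα : 0 < (γ - 1) / 2 := by linarith
  have hrarefaction : HasDerivWithinAt (phiB γ) (kappa γ) (Iic 1) 1 := by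
    have h := ((hasDerivAt_id (1 : ℝ)).sub_const 1).const_mul (kappa γ)
    rw [mul_one] at h
    exact h.hasDerivWithinAt.congr (fun z (hz : z ≤ 1) => if_pos hz) (if_pos le_rfl)
  have hshock : HasDerivWithinAt (phiB γ) (kappa γ) (Ici 1) 1 := by
    have h := hasDerivWithinAt_sqrt_mul_Ioi
      ((hasDerivAt_rpow_const_one (-(1 : ℝ) / ((γ - 1) / 2))).const_sub 1)
      ((hasDerivAt_rpow_const_one (γ / ((γ - 1) / 2))).sub_const 1)
      (by simp) (by simp)
    have hκ : √(-(-(1 : ℝ) / ((γ - 1) / 2)) * (γ / ((γ - 1) / 2))) = kappa γ := by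
      rw [show -(-(1 : ℝ) / ((γ - 1) / 2)) * (γ / ((γ - 1) / 2)) = γ / ((γ - 1) / 2) ^ 2 by
        field_simp, sqrt_div' _ (sq_nonneg _), sqrt_sq hα.le, kappa]
    rw [hκ] at h
    exact (h.congr (fun z (hz : 1 < z) => if_neg (not_le.2 hz)) (by simp)).Ici_of_Ioi
  simpa [Iic_union_Ici] using hrarefaction.union hshock

end BackwardAuxiliary

theorem hasDerivAt_interaction_lhs {φ B : ℝ → ℝ} {K D b y : ℝ} (hy : y ≠ 0) (hφ1 : φ 1 = 0)
    (hK : HasDerivAt φ K 1) (hD : HasDerivAt φ D y) (hB : HasDerivAt B b 1) (hB1 : B 1 = y) :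
    HasDerivAt (fun x => φ (B x) + x * y * φ (B x / (x * y))) (D * b + K * (b - y)) 1 := by
  have hxy : HasDerivAt (fun x => x * y) y 1 := by simpa using (hasDerivAt_id (1 : ℝ)).mul_const y
  have hq1 : B 1 / (1 * y) = 1 := by rw [hB1, one_mul, div_self hy]
  have hq : HasDerivAt (fun x => B x / (x * y)) ((b - y) / y) 1 := by
    refine (hB.div hxy (by simpa using hy)).congr_deriv ?_
    rw [hB1]
    field_simp
  have hφB := (hB1 ▸ hD).comp 1 hB
  have hφq := hxy.mul ((hq1.symm ▸ hK).comp 1 hq)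
  refine (hφB.add hφq).congr_deriv ?_
  simp only [Function.comp_apply, hq1, hφ1]
  field_simp
  ring

/-- derivative at x = 1 of the outgoing backward strength B(x)
    in an overtaking interaction with fixed second strength y > 1. -/
theorem deriv_outgoing_strength (γ : ℝ) (hγ : 1 < γ) (y : ℝ) (hy : 1 < y)
    (B : ℝ → ℝ) (s : Set ℝ) (hs : s ∈ nhds (1 : ℝ))
    (hdiff : ∀ x ∈ s, DifferentiableAt ℝ B x)
    (hB1 : B 1 = y)
    (heq : ∀ x ∈ s,
      phiB γ (B x) + x * y * phiB γ (B x / (x * y)) = phiB γ x + x * phiB γ y) :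
    deriv B 1 = (phiB γ y + kappa γ * (y + 1)) / (deriv (phiB γ) y + kappa γ) := by
  have hB := (hdiff 1 (mem_of_mem_nhds hs)).hasDerivAt
  have hL := hasDerivAt_interaction_lhs (by positivity) (phiB_one γ) (hasDerivAt_phiB_one hγ)
    (differentiableAt_phiB hγ hy).hasDerivAt hB hB1
  have hR : HasDerivAt (fun x => phiB γ x + x * phiB γ y) (kappa γ + phiB γ y) 1 :=
    (hasDerivAt_phiB_one hγ).add (by simpa using (hasDerivAt_id (1 : ℝ)).mul_const (phiB γ y))
  have hderiv := hL.unique (hR.congr_of_eventuallyEq (eventuallyEq_of_mem hs heq))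
  have hden : 0 < deriv (phiB γ) y + kappa γ :=
    add_pos_of_nonneg_of_pos (phiB_monotone hγ).deriv_nonneg (kappa_pos hγ)
  rw [eq_div_iff hden.ne']
  linarith
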